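/- arXiv:2008.09549 — 3 statements merged into one kernel-verified Lean document; each statement's English description precedes it below -/
import Mathlib

section
/- Let G be a graph that is the union of a cycle C = P1 ∪ P2 (where P1 and P2 are internally disjoint paths of the same length r+1 from a vertex x to a vertex v, with internal vertices x_1,...,x_r and y_1,...,y_r respectively, ordered by distance from x) together with a set of chords, each chord joining some x_k to some y_l. Suppose every chord x_k y_l is short, i.e., |k - l| ≤ 1, and the chords form a perfect matching on the internal vertices {x_1,...,x_r,y_1,...,y_r}. Then x_k y_l is a chord if and only if x_l y_k is a chord (for all k, l with |k-l| ≤ 1). -/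
/-- Short chords forming a perfect matching between the internal vertices
`x_1, …, x_r` and `y_1, …, y_r` of the two equal-length paths of a cycle are
symmetric: if every chord `x_k y_l` satisfies `|k - l| ≤ 1` and the chords form a
perfect matching (every `x_k` is on exactly one chord and every `y_l` is on exactly
one chord), then `x_k y_l` is a chord if and only if `x_l y_k` is. -/
theorem short_chords_symmetric (r : ℕ) (chord : Fin r → Fin r → Prop)
    (hmatch₁ : ∀ k, ∃! l, chord k l) (hmatch₂ : ∀ l, ∃! k, chord k l)
    (hshort : ∀ k l, chord k l → ((k : ℤ) - (l : ℤ)).natAbs ≤ 1) :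
    ∀ k l, chord k l ↔ chord l k := by
  have key : ∀ n : ℕ, ∀ k l : Fin r, (k : ℕ) = n → chord k l → chord l k := by
    intro n
    induction n using Nat.strong_induction_on with
    | _ n IH =>
    intro k l hk hkl
    have hs := hshort k l hkl
    have hs' : (k : ℕ) = l ∨ (k : ℕ) + 1 = l ∨ (l : ℕ) + 1 = k := by omega
    rcases hs' with h | h | h
    · have hkl' : k = l := Fin.ext h
      subst hkl'
      exact hkl
    · -- l = k + 1 ; look at the unique m matched to y_k
      obtain ⟨m, hm, hmu⟩ := hmatch₂ k
      have hms := hshort m k hm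
      have hm3 : (m : ℕ) = k ∨ (m : ℕ) + 1 = k ∨ (k : ℕ) + 1 = m := by omega
      rcases hm3 with h1 | h1 | h1
      · exfalso
        have hmk : m = k := Fin.ext h1
        obtain ⟨l', hl', hlu⟩ := hmatch₁ k
        have e1 := hlu l hkl
        have e2 := hlu k (hmk ▸ hm)
        have := congrArg Fin.val (e1.trans e2.symm)
        omega
      · exfalso
        have hkm := IH m (by omega) m k rfl hm
        obtain ⟨l', hl', hlu⟩ := hmatch₁ k
        have e1 := hlu l hkl
        have e2 := hlu m hkm
        have := congrArg Fin.val (e1.trans e2.symm)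
        omega
      · have hml : m = l := Fin.ext (by omega)
        exact hml ▸ hm
    · -- k = l + 1 ; look at the unique m matched to x_l
      obtain ⟨m, hm, hmu⟩ := hmatch₁ l
      have hms := hshort l m hm
      have hm3 : (m : ℕ) = l ∨ (m : ℕ) + 1 = l ∨ (l : ℕ) + 1 = m := by omega
      rcases hm3 with h1 | h1 | h1
      · exfalso
        have hml : m = l := Fin.ext h1
        obtain ⟨k', hk', hku⟩ := hmatch₂ l
        have e1 := hku k hkl
        have e2 := hku l (hml ▸ hm)
        have := congrArg Fin.val (e1.trans e2.symm)
        omega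
      · exfalso
        have hml := IH (l : ℕ) (by omega) l m rfl hm
        obtain ⟨k', hk', hku⟩ := hmatch₂ l
        have e1 := hku k hkl
        have e2 := hku m hml
        have := congrArg Fin.val (e1.trans e2.symm)
        omega
      · have hmk : m = k := Fin.ext (by omega)
        exact hmk ▸ hm
  intro k l
  exact ⟨key (k : ℕ) k l rfl, key (l : ℕ) l k rfl⟩
end

section
/- Let C be a cycle of even length with vertices partitioned into two paths P1 = x x_1 ... x_r v and P2 = x y_1 ... y_r v from x to v of equal length, and let M1, M2 be the two perfect matchings decomposing E(C). Let G' be the graph on V(C) consisting of C together with additional chord edges, each joining some x_k to some y_l with |k-l| ≤ 1, such that x_k y_l is a chord iff x_l y_k is. Then G' - M1 is a Hamiltonian path from x to v. -/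
open SimpleGraph

/-- The vertex type of an even cycle given by two internally disjoint paths
`x x_1 … x_r v` and `x y_1 … y_r v`:  `Sum.inl (Sum.inl k)` is `x_{k+1}`,
`Sum.inl (Sum.inr k)` is `y_{k+1}`, `Sum.inr false` is `x` and `Sum.inr true` is `v`. -/
abbrev CycVtx (r : ℕ) : Type := (Fin r ⊕ Fin r) ⊕ Bool

/-- The edge relation of the even cycle `x x_1 … x_r v y_r … y_1 x`. -/
def cycRel (r : ℕ) : CycVtx r → CycVtx r → Prop
  | .inr false, .inl (.inl k) => k.val = 0
  | .inr false, .inl (.inr k) => k.val = 0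
  | .inl (.inl k), .inl (.inl l) => l.val = k.val + 1
  | .inl (.inr k), .inl (.inr l) => l.val = k.val + 1
  | .inl (.inl k), .inr true => k.val = r - 1
  | .inl (.inr k), .inr true => k.val = r - 1
  | _, _ => False

/-- The chord relation: `x_{k+1}` is joined to `y_{l+1}` whenever `chord k l`. -/
def chordRel (r : ℕ) (chord : Fin r → Fin r → Prop) : CycVtx r → CycVtx r → Prop
  | .inl (.inl k), .inl (.inr l) => chord k l
  | _, _ => False

/-- The even cycle `C` on the vertices `x, x_1, …, x_r, v, y_r, …, y_1`. -/
def evenCycle (r : ℕ) : SimpleGraph (CycVtx r) := SimpleGraph.fromRel (cycRel r)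

/-- The graph `G'`: the even cycle together with the chords. -/
def cycleWithChords (r : ℕ) (chord : Fin r → Fin r → Prop) : SimpleGraph (CycVtx r) :=
  SimpleGraph.fromRel (fun a b => cycRel r a b ∨ chordRel r chord a b)

set_option linter.unreachableTactic false
set_option linter.unusedTactic false

/-- `x_{i+1}` for `i < r`, and `v` for `i = r`. -/
def xv (r i : ℕ) : CycVtx r := if h : i < r then .inl (.inl ⟨i, h⟩) else .inr true
def yv (r i : ℕ) : CycVtx r := if h : i < r then .inl (.inr ⟨i, h⟩) else .inr true

/-- `j`-th vertex on the x-line `x, x_1, …, x_r, v`. -/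
def Xp (r : ℕ) : ℕ → CycVtx r
  | 0 => .inr false
  | j+1 => xv r j

def Yp (r : ℕ) : ℕ → CycVtx r
  | 0 => .inr false
  | j+1 => yv r j

lemma Xp_ne {r : ℕ} (j : ℕ) (hj : j ≤ r) : Xp r j ≠ Xp r (j+1) := by
  match j with
  | 0 => simp only [Xp, xv]; split <;> simp
  | m+1 =>
    simp only [Xp, xv]
    have hm : m < r := by omega
    rw [dif_pos hm]
    split <;> simp <;> omega

lemma Yp_ne {r : ℕ} (j : ℕ) (hj : j ≤ r) : Yp r j ≠ Yp r (j+1) := by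
  match j with
  | 0 => simp only [Yp, yv]; split <;> simp
  | m+1 =>
    simp only [Yp, yv]
    have hm : m < r := by omega
    rw [dif_pos hm]
    split <;> simp <;> omega

lemma nbrX {r : ℕ} (j : ℕ) (hj : j < r) (b : CycVtx r)
    (h : (evenCycle r).Adj (xv r j) b) : b = Xp r j ∨ b = xv r (j+1) := by
  rw [evenCycle, fromRel_adj] at h
  obtain ⟨-, h⟩ := h
  rw [show xv r j = .inl (.inl ⟨j, hj⟩) from dif_pos hj] at h
  match b with
  | .inr false =>
    simp only [cycRel] at h
    have hj0 : j = 0 := by tauto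
    subst hj0; left; rfl
  | .inr true =>
    simp only [cycRel] at h
    have hjr : j = r - 1 := by tauto
    right; rw [show j + 1 = r by omega]
    simp [xv]
  | .inl (.inl l) =>
    simp only [cycRel] at h
    rcases h with h | h
    · right
      have hlt : j + 1 < r := by omega
      rw [show xv r (j+1) = .inl (.inl ⟨j+1, hlt⟩) from dif_pos hlt]
      simp [Fin.ext_iff]; omega
    · left
      obtain ⟨m, rfl⟩ : ∃ m, j = m + 1 := ⟨l.val, by omega⟩
      have hlt : m < r := by omega
      rw [show Xp r (m+1) = xv r m from rfl,
        show xv r m = .inl (.inl ⟨m, hlt⟩) from dif_pos hlt]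
      simp [Fin.ext_iff]; omega
  | .inl (.inr l) => simp only [cycRel] at h; tauto

lemma nbrY {r : ℕ} (j : ℕ) (hj : j < r) (b : CycVtx r)
    (h : (evenCycle r).Adj (yv r j) b) : b = Yp r j ∨ b = yv r (j+1) := by
  rw [evenCycle, fromRel_adj] at h
  obtain ⟨-, h⟩ := h
  rw [show yv r j = .inl (.inr ⟨j, hj⟩) from dif_pos hj] at h
  match b with
  | .inr false =>
    simp only [cycRel] at h
    have hj0 : j = 0 := by tauto
    subst hj0; left; rfl
  | .inr true =>
    simp only [cycRel] at h
    have hjr : j = r - 1 := by tauto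
    right; rw [show j + 1 = r by omega]
    simp [yv]
  | .inl (.inr l) =>
    simp only [cycRel] at h
    rcases h with h | h
    · right
      have hlt : j + 1 < r := by omega
      rw [show yv r (j+1) = .inl (.inr ⟨j+1, hlt⟩) from dif_pos hlt]
      simp [Fin.ext_iff]; omega
    · left
      obtain ⟨m, rfl⟩ : ∃ m, j = m + 1 := ⟨l.val, by omega⟩
      have hlt : m < r := by omega
      rw [show Yp r (m+1) = yv r m from rfl,
        show yv r m = .inl (.inr ⟨m, hlt⟩) from dif_pos hlt]
      simp [Fin.ext_iff]; omega
  | .inl (.inl l) => simp only [cycRel] at h; tauto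

lemma nbr0 {r : ℕ} (b : CycVtx r)
    (h : (evenCycle r).Adj (.inr false) b) : b = xv r 0 ∨ b = yv r 0 := by
  rw [evenCycle, fromRel_adj] at h
  obtain ⟨-, h⟩ := h
  match b with
  | .inr false => simp only [cycRel] at h; tauto
  | .inr true => simp only [cycRel] at h; tauto
  | .inl (.inl l) =>
    simp only [cycRel] at h
    have hl : l.val = 0 := by tauto
    left
    rw [show xv r 0 = .inl (.inl ⟨0, l.isLt.trans_le' (by omega)⟩) from dif_pos _]
    simp [Fin.ext_iff]; omega
  | .inl (.inr l) =>
    simp only [cycRel] at h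
    have hl : l.val = 0 := by tauto
    right
    rw [show yv r 0 = .inl (.inr ⟨0, l.isLt.trans_le' (by omega)⟩) from dif_pos _]
    simp [Fin.ext_iff]; omega

lemma Xp_ne_two {r : ℕ} (j : ℕ) (hj : j + 1 ≤ r) : Xp r j ≠ Xp r (j+2) := by
  match j with
  | 0 => simp only [Xp, xv]; split <;> simp
  | m+1 =>
    simp only [Xp, xv]
    have hm : m < r := by omega
    rw [dif_pos hm]
    split <;> simp <;> omega

lemma Yp_ne_two {r : ℕ} (j : ℕ) (hj : j + 1 ≤ r) : Yp r j ≠ Yp r (j+2) := by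
  match j with
  | 0 => simp only [Yp, yv]; split <;> simp
  | m+1 =>
    simp only [Yp, yv]
    have hm : m < r := by omega
    rw [dif_pos hm]
    split <;> simp <;> omega

lemma keyX {r : ℕ} (M1 : (evenCycle r).Subgraph) (hM1 : M1.IsPerfectMatching)
    (ε : ℕ) (hε : ε ≤ 1) (h0 : M1.Adj (Xp r 0) (Xp r 1) ↔ 0 = ε) :
    ∀ j, j ≤ r → (M1.Adj (Xp r j) (Xp r (j+1)) ↔ j % 2 = ε) := by
  intro j
  induction j with
  | zero => intro _; simpa using h0
  | succ j ih =>
    intro hj1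
    have hjr : j < r := by omega
    have ihh := ih (by omega)
    have hmem : Xp r (j+1) ∈ M1.verts := hM1.2 _
    obtain ⟨w, hw, huniq⟩ := hM1.1 hmem
    by_cases hpar : j % 2 = ε
    · have hadj : M1.Adj (Xp r (j+1)) (Xp r j) := (ihh.mpr hpar).symm
      constructor
      · intro hadj2
        exact absurd ((huniq _ hadj).trans (huniq _ hadj2).symm) (Xp_ne_two j (by omega))
      · intro hpar2; exact absurd hpar2 (by omega)
    · constructor
      · intro _; omega
      · intro _
        have hw' := nbrX j hjr w (M1.adj_sub hw)
        rcases hw' with h1 | h1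
        · exact absurd (ihh.mp (h1 ▸ hw).symm) hpar
        · rw [show Xp r (j+1+1) = xv r (j+1) from rfl, ← h1]; exact hw

lemma keyY {r : ℕ} (M1 : (evenCycle r).Subgraph) (hM1 : M1.IsPerfectMatching)
    (ε : ℕ) (hε : ε ≤ 1) (h0 : M1.Adj (Yp r 0) (Yp r 1) ↔ 0 = ε) :
    ∀ j, j ≤ r → (M1.Adj (Yp r j) (Yp r (j+1)) ↔ j % 2 = ε) := by
  intro j
  induction j with
  | zero => intro _; simpa using h0
  | succ j ih =>
    intro hj1
    have hjr : j < r := by omega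
    have ihh := ih (by omega)
    have hmem : Yp r (j+1) ∈ M1.verts := hM1.2 _
    obtain ⟨w, hw, huniq⟩ := hM1.1 hmem
    by_cases hpar : j % 2 = ε
    · have hadj : M1.Adj (Yp r (j+1)) (Yp r j) := (ihh.mpr hpar).symm
      constructor
      · intro hadj2
        exact absurd ((huniq _ hadj).trans (huniq _ hadj2).symm) (Yp_ne_two j (by omega))
      · intro hpar2; exact absurd hpar2 (by omega)
    · constructor
      · intro _; omega
      · intro _
        have hw' := nbrY j hjr w (M1.adj_sub hw)
        rcases hw' with h1 | h1
        · exact absurd (ihh.mp (h1 ▸ hw).symm) hpar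
        · rw [show Yp r (j+1+1) = yv r (j+1) from rfl, ← h1]; exact hw

lemma not_mem_of_lt {r : ℕ} {G : SimpleGraph (CycVtx r)} {u v : CycVtx r} {p : G.Walk u v} {i : ℕ}
    (hsup : ∀ w, w ∈ p.support ↔ (w = .inr true ∨
      ∃ k : Fin r, i ≤ k.val ∧ (w = .inl (.inl k) ∨ w = .inl (.inr k))))
    (m : ℕ) (hm : m < i) (hmr : m < r) :
    (.inl (.inl ⟨m, hmr⟩) : CycVtx r) ∉ p.support ∧
      (.inl (.inr ⟨m, hmr⟩) : CycVtx r) ∉ p.support := by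
  constructor <;>
  · rw [hsup]
    rintro (h | ⟨k, hk, h | h⟩) <;> simp [Fin.ext_iff] at h <;> omega

lemma mainInd {r : ℕ} (chord : Fin r → Fin r → Prop)
    (G : SimpleGraph (CycVtx r)) (σ : Fin r → Fin r)
    (hσc : ∀ k, chord k (σ k))
    (hσinv : ∀ k, σ (σ k) = k)
    (hσs : ∀ k : Fin r, (σ k : ℕ) ≤ (k : ℕ) + 1 ∧ (k : ℕ) ≤ (σ k : ℕ) + 1)
    (ε : ℕ) (hε : ε ≤ 1)
    (Gc : ∀ k l : Fin r, chord k l → G.Adj (.inl (.inl k)) (.inl (.inr l)))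
    (GX : ∀ j, j ≤ r → j % 2 ≠ ε → G.Adj (Xp r j) (Xp r (j+1)))
    (GY : ∀ j, j ≤ r → j % 2 = ε → G.Adj (Yp r j) (Yp r (j+1))) :
    ∀ n i, i + n = r → (∀ hi : i < r, i ≤ (σ ⟨i, hi⟩ : ℕ)) →
      ∃ p : G.Walk (if (i+1) % 2 = ε then xv r i else yv r i) (.inr true),
        p.IsPath ∧ ∀ w, (w ∈ p.support ↔ (w = .inr true ∨
          ∃ k : Fin r, i ≤ k.val ∧ (w = .inl (.inl k) ∨ w = .inl (.inr k)))) := by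
  intro n
  induction n using Nat.strong_induction_on with
  | _ n ih =>
  intro i hin hge
  match n, hin with
  | 0, hin =>
    have hir : i = r := by omega
    have hx : xv r i = .inr true := by rw [hir]; exact dif_neg (lt_irrefl r)
    have hy : yv r i = .inr true := by rw [hir]; exact dif_neg (lt_irrefl r)
    have he : (.inr true : CycVtx r) = (if (i+1) % 2 = ε then xv r i else yv r i) := by
      split
      · exact hx.symm
      · exact hy.symm
    refine ⟨Walk.nil.copy he rfl, by simp, ?_⟩
    intro w
    rw [Walk.support_copy]
    simp only [Walk.support_nil, List.mem_singleton]
    constructor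
    · intro h; exact Or.inl h
    · rintro (h | ⟨k, hk, h | h⟩)
      · exact h
      · exact absurd k.isLt (by omega)
      · exact absurd k.isLt (by omega)
  | (n'+1), hin =>
  have hik : i < r := by omega
  have hge0 := hge hik
  have hs0 := hσs ⟨i, hik⟩
  simp only [Fin.val_mk] at hge0 hs0
  have exv : xv r i = (.inl (.inl ⟨i, hik⟩) : CycVtx r) := dif_pos hik
  have eyv : yv r i = (.inl (.inr ⟨i, hik⟩) : CycVtx r) := dif_pos hik
  by_cases hfix : (σ ⟨i, hik⟩ : ℕ) = i
  · -- fixed point block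
    have hσk0 : σ ⟨i, hik⟩ = ⟨i, hik⟩ := Fin.ext hfix
    have hch : chord ⟨i, hik⟩ ⟨i, hik⟩ := by have := hσc ⟨i, hik⟩; rwa [hσk0] at this
    have hge' : ∀ h : i+1 < r, i+1 ≤ (σ ⟨i+1, h⟩ : ℕ) := by
      intro h
      have hs1 := hσs ⟨i+1, h⟩
      have hne : (σ ⟨i+1, h⟩ : ℕ) ≠ i := by
        intro hc
        have h1 : σ ⟨i+1, h⟩ = ⟨i, hik⟩ := Fin.ext hc
        have h2 := congrArg σ h1
        rw [hσinv, hσk0] at h2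
        exact absurd (congrArg Fin.val h2) (by simp)
      simp only [Fin.val_mk] at hs1
      omega
    obtain ⟨p', hp', hsup'⟩ := ih n' (by omega) (i+1) (by omega) hge'
    have hnm := not_mem_of_lt hsup' i (by omega) hik
    by_cases hpar : (i+1) % 2 = ε
    · have p'' : G.Walk (yv r (i+1)) (.inr true) := p'.copy (if_neg (by omega)) rfl
      have e1 : G.Adj (xv r i) (yv r i) := by rw [exv, eyv]; exact Gc _ _ hch
      have e2 : G.Adj (yv r i) (yv r (i+1)) := GY (i+1) (by omega) hpar
      refine ⟨(Walk.cons e1 (Walk.cons e2 (p'.copy (if_neg (by omega)) rfl))).copy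
        (if_pos hpar).symm rfl, ?_, ?_⟩
      · rw [Walk.isPath_copy, Walk.cons_isPath_iff, Walk.cons_isPath_iff]
        refine ⟨⟨by simpa using hp', ?_⟩, ?_⟩
        · rw [Walk.support_copy]; rw [eyv]; exact hnm.2
        · rw [Walk.support_cons, Walk.support_copy, List.mem_cons]
          rintro (h | h)
          · rw [exv, eyv] at h; simp at h
          · rw [exv] at h; exact hnm.1 h
      · intro w
        rw [Walk.support_copy, Walk.support_cons, Walk.support_cons, Walk.support_copy]
        simp only [List.mem_cons]
        rw [hsup' w]
        constructor
        · rintro (rfl | rfl | h | ⟨k, hk, h⟩)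
          · exact Or.inr ⟨⟨i, hik⟩, le_refl _, Or.inl exv⟩
          · exact Or.inr ⟨⟨i, hik⟩, le_refl _, Or.inr eyv⟩
          · exact Or.inl h
          · exact Or.inr ⟨k, by omega, h⟩
        · rintro (h | ⟨k, hk, h⟩)
          · exact Or.inr (Or.inr (Or.inl h))
          · by_cases hki : (k : ℕ) = i
            · have hkk : k = ⟨i, hik⟩ := Fin.ext hki
              subst hkk
              rcases h with rfl | rfl
              · exact Or.inl exv.symm
              · exact Or.inr (Or.inl eyv.symm)
            · exact Or.inr (Or.inr (Or.inr ⟨k, by omega, h⟩))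
    · have e1 : G.Adj (yv r i) (xv r i) := by rw [exv, eyv]; exact (Gc _ _ hch).symm
      have e2 : G.Adj (xv r i) (xv r (i+1)) := GX (i+1) (by omega) hpar
      refine ⟨(Walk.cons e1 (Walk.cons e2 (p'.copy (if_pos (by omega)) rfl))).copy
        (if_neg hpar).symm rfl, ?_, ?_⟩
      · rw [Walk.isPath_copy, Walk.cons_isPath_iff, Walk.cons_isPath_iff]
        refine ⟨⟨by simpa using hp', ?_⟩, ?_⟩
        · rw [Walk.support_copy]; rw [exv]; exact hnm.1
        · rw [Walk.support_cons, Walk.support_copy, List.mem_cons]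
          rintro (h | h)
          · rw [exv, eyv] at h; simp at h
          · rw [eyv] at h; exact hnm.2 h
      · intro w
        rw [Walk.support_copy, Walk.support_cons, Walk.support_cons, Walk.support_copy]
        simp only [List.mem_cons]
        rw [hsup' w]
        constructor
        · rintro (rfl | rfl | h | ⟨k, hk, h⟩)
          · exact Or.inr ⟨⟨i, hik⟩, le_refl _, Or.inr eyv⟩
          · exact Or.inr ⟨⟨i, hik⟩, le_refl _, Or.inl exv⟩
          · exact Or.inl h
          · exact Or.inr ⟨k, by omega, h⟩
        · rintro (h | ⟨k, hk, h⟩)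
          · exact Or.inr (Or.inr (Or.inl h))
          · by_cases hki : (k : ℕ) = i
            · have hkk : k = ⟨i, hik⟩ := Fin.ext hki
              subst hkk
              rcases h with rfl | rfl
              · exact Or.inr (Or.inl exv.symm)
              · exact Or.inl eyv.symm
            · exact Or.inr (Or.inr (Or.inr ⟨k, by omega, h⟩))
  · -- swap block
    have hk1 : (σ ⟨i, hik⟩ : ℕ) = i + 1 := by omega
    have hi1r : i + 1 < r := by have := (σ ⟨i, hik⟩).isLt; omega
    have hσk0 : σ ⟨i, hik⟩ = ⟨i+1, hi1r⟩ := Fin.ext hk1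
    have exv1 : xv r (i+1) = (.inl (.inl ⟨i+1, hi1r⟩) : CycVtx r) := dif_pos hi1r
    have eyv1 : yv r (i+1) = (.inl (.inr ⟨i+1, hi1r⟩) : CycVtx r) := dif_pos hi1r
    have hch1 : chord ⟨i, hik⟩ ⟨i+1, hi1r⟩ := by have := hσc ⟨i, hik⟩; rwa [hσk0] at this
    have hch2 : chord ⟨i+1, hi1r⟩ ⟨i, hik⟩ := by
      have := hσc ⟨i+1, hi1r⟩
      rwa [show σ ⟨i+1, hi1r⟩ = ⟨i, hik⟩ from by rw [← hσk0, hσinv]] at this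
    have hge'' : ∀ h : i+2 < r, i+2 ≤ (σ ⟨i+2, h⟩ : ℕ) := by
      intro h
      have hs2 := hσs ⟨i+2, h⟩
      have hne : (σ ⟨i+2, h⟩ : ℕ) ≠ i+1 := by
        intro hc
        have h1 : σ ⟨i+2, h⟩ = ⟨i+1, hi1r⟩ := Fin.ext hc
        have h2 := congrArg σ h1
        rw [hσinv, ← hσk0, hσinv] at h2
        exact absurd (congrArg Fin.val h2) (by simp)
      simp only [Fin.val_mk] at hs2
      omega
    obtain ⟨p', hp', hsup'⟩ := ih (n'-1) (by omega) (i+2) (by omega) hge''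
    have hnm := not_mem_of_lt hsup' i (by omega) hik
    have hnm1 := not_mem_of_lt hsup' (i+1) (by omega) hi1r
    by_cases hpar : (i+1) % 2 = ε
    · have e1 : G.Adj (xv r i) (yv r (i+1)) := by rw [exv, eyv1]; exact Gc _ _ hch1
      have e2 : G.Adj (yv r (i+1)) (yv r i) := (GY (i+1) (by omega) hpar).symm
      have e3 : G.Adj (yv r i) (xv r (i+1)) := by rw [eyv, exv1]; exact (Gc _ _ hch2).symm
      have e4 : G.Adj (xv r (i+1)) (xv r (i+2)) := GX (i+2) (by omega) (by omega)
      refine ⟨(Walk.cons e1 (Walk.cons e2 (Walk.cons e3 (Walk.cons e4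
        (p'.copy (if_pos (by omega)) rfl))))).copy (if_pos hpar).symm rfl, ?_, ?_⟩
      · rw [Walk.isPath_copy, Walk.cons_isPath_iff, Walk.cons_isPath_iff,
          Walk.cons_isPath_iff, Walk.cons_isPath_iff]
        refine ⟨⟨⟨⟨by simpa using hp', ?_⟩, ?_⟩, ?_⟩, ?_⟩
        · rw [Walk.support_copy, exv1]; exact hnm1.1
        · rw [Walk.support_cons, Walk.support_copy, List.mem_cons]
          rintro (h | h)
          · rw [eyv, exv1] at h; simp at h
          · rw [eyv] at h; exact hnm.2 h
        · rw [Walk.support_cons, Walk.support_cons, Walk.support_copy, List.mem_cons,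
            List.mem_cons]
          rintro (h | h | h)
          · rw [eyv1, eyv] at h; simp [Fin.ext_iff] at h
          · rw [eyv1, exv1] at h; simp at h
          · rw [eyv1] at h; exact hnm1.2 h
        · rw [Walk.support_cons, Walk.support_cons, Walk.support_cons, Walk.support_copy,
            List.mem_cons, List.mem_cons, List.mem_cons]
          rintro (h | h | h | h)
          · rw [exv, eyv1] at h; simp at h
          · rw [exv, eyv] at h; simp at h
          · rw [exv, exv1] at h; simp [Fin.ext_iff] at h
          · rw [exv] at h; exact hnm.1 h
      · intro w
        rw [Walk.support_copy, Walk.support_cons, Walk.support_cons, Walk.support_cons,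
          Walk.support_cons, Walk.support_copy]
        simp only [List.mem_cons]
        rw [hsup' w]
        constructor
        · rintro (rfl | rfl | rfl | rfl | h | ⟨k, hk, h⟩)
          · exact Or.inr ⟨⟨i, hik⟩, le_refl _, Or.inl exv⟩
          · exact Or.inr ⟨⟨i+1, hi1r⟩, by simp, Or.inr eyv1⟩
          · exact Or.inr ⟨⟨i, hik⟩, le_refl _, Or.inr eyv⟩
          · exact Or.inr ⟨⟨i+1, hi1r⟩, by simp, Or.inl exv1⟩
          · exact Or.inl h
          · exact Or.inr ⟨k, by omega, h⟩
        · rintro (h | ⟨k, hk, h⟩)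
          · exact Or.inr (Or.inr (Or.inr (Or.inr (Or.inl h))))
          · by_cases hki : (k : ℕ) = i
            · have hkk : k = ⟨i, hik⟩ := Fin.ext hki
              subst hkk
              rcases h with rfl | rfl
              · exact Or.inl exv.symm
              · exact Or.inr (Or.inr (Or.inl eyv.symm))
            · by_cases hki1 : (k : ℕ) = i + 1
              · have hkk : k = ⟨i+1, hi1r⟩ := Fin.ext hki1
                subst hkk
                rcases h with rfl | rfl
                · exact Or.inr (Or.inr (Or.inr (Or.inl exv1.symm)))
                · exact Or.inr (Or.inl eyv1.symm)
              · exact Or.inr (Or.inr (Or.inr (Or.inr (Or.inr ⟨k, by omega, h⟩))))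
    · have e1 : G.Adj (yv r i) (xv r (i+1)) := by rw [eyv, exv1]; exact (Gc _ _ hch2).symm
      have e2 : G.Adj (xv r (i+1)) (xv r i) := (GX (i+1) (by omega) hpar).symm
      have e3 : G.Adj (xv r i) (yv r (i+1)) := by rw [exv, eyv1]; exact Gc _ _ hch1
      have e4 : G.Adj (yv r (i+1)) (yv r (i+2)) := GY (i+2) (by omega) (by omega)
      refine ⟨(Walk.cons e1 (Walk.cons e2 (Walk.cons e3 (Walk.cons e4
        (p'.copy (if_neg (by omega)) rfl))))).copy (if_neg hpar).symm rfl, ?_, ?_⟩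
      · rw [Walk.isPath_copy, Walk.cons_isPath_iff, Walk.cons_isPath_iff,
          Walk.cons_isPath_iff, Walk.cons_isPath_iff]
        refine ⟨⟨⟨⟨by simpa using hp', ?_⟩, ?_⟩, ?_⟩, ?_⟩
        · rw [Walk.support_copy, eyv1]; exact hnm1.2
        · rw [Walk.support_cons, Walk.support_copy, List.mem_cons]
          rintro (h | h)
          · rw [exv, eyv1] at h; simp at h
          · rw [exv] at h; exact hnm.1 h
        · rw [Walk.support_cons, Walk.support_cons, Walk.support_copy, List.mem_cons,
            List.mem_cons]
          rintro (h | h | h)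
          · rw [exv1, exv] at h; simp [Fin.ext_iff] at h
          · rw [exv1, eyv1] at h; simp at h
          · rw [exv1] at h; exact hnm1.1 h
        · rw [Walk.support_cons, Walk.support_cons, Walk.support_cons, Walk.support_copy,
            List.mem_cons, List.mem_cons, List.mem_cons]
          rintro (h | h | h | h)
          · rw [eyv, exv1] at h; simp at h
          · rw [eyv, exv] at h; simp at h
          · rw [eyv, eyv1] at h; simp [Fin.ext_iff] at h
          · rw [eyv] at h; exact hnm.2 h
      · intro w
        rw [Walk.support_copy, Walk.support_cons, Walk.support_cons, Walk.support_cons,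
          Walk.support_cons, Walk.support_copy]
        simp only [List.mem_cons]
        rw [hsup' w]
        constructor
        · rintro (rfl | rfl | rfl | rfl | h | ⟨k, hk, h⟩)
          · exact Or.inr ⟨⟨i, hik⟩, le_refl _, Or.inr eyv⟩
          · exact Or.inr ⟨⟨i+1, hi1r⟩, by simp, Or.inl exv1⟩
          · exact Or.inr ⟨⟨i, hik⟩, le_refl _, Or.inl exv⟩
          · exact Or.inr ⟨⟨i+1, hi1r⟩, by simp, Or.inr eyv1⟩
          · exact Or.inl h
          · exact Or.inr ⟨k, by omega, h⟩
        · rintro (h | ⟨k, hk, h⟩)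
          · exact Or.inr (Or.inr (Or.inr (Or.inr (Or.inl h))))
          · by_cases hki : (k : ℕ) = i
            · have hkk : k = ⟨i, hik⟩ := Fin.ext hki
              subst hkk
              rcases h with rfl | rfl
              · exact Or.inr (Or.inr (Or.inl exv.symm))
              · exact Or.inl eyv.symm
            · by_cases hki1 : (k : ℕ) = i + 1
              · have hkk : k = ⟨i+1, hi1r⟩ := Fin.ext hki1
                subst hkk
                rcases h with rfl | rfl
                · exact Or.inr (Or.inl exv1.symm)
                · exact Or.inr (Or.inr (Or.inr (Or.inl eyv1.symm)))
              · exact Or.inr (Or.inr (Or.inr (Or.inr (Or.inr ⟨k, by omega, h⟩))))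

lemma cwcX {r : ℕ} (hr : 1 ≤ r) (chord : Fin r → Fin r → Prop) (j : ℕ) (hj : j ≤ r) :
    (cycleWithChords r chord).Adj (Xp r j) (Xp r (j+1)) := by
  rw [cycleWithChords, fromRel_adj]
  refine ⟨Xp_ne j hj, Or.inl (Or.inl ?_)⟩
  match j with
  | 0 =>
    have h0 : (0:ℕ) < r := hr
    rw [show Xp r 1 = xv r 0 from rfl, show xv r 0 = .inl (.inl ⟨0, h0⟩) from dif_pos h0]
    exact rfl
  | m+1 =>
    have hm : m < r := by omega
    rw [show Xp r (m+1) = xv r m from rfl, show xv r m = .inl (.inl ⟨m, hm⟩) from dif_pos hm]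
    by_cases h1 : m+1 < r
    · rw [show Xp r (m+2) = xv r (m+1) from rfl,
        show xv r (m+1) = .inl (.inl ⟨m+1, h1⟩) from dif_pos h1]
      exact rfl
    · rw [show Xp r (m+2) = xv r (m+1) from rfl,
        show xv r (m+1) = .inr true from dif_neg h1]
      show m = r - 1
      omega

lemma cwcY {r : ℕ} (hr : 1 ≤ r) (chord : Fin r → Fin r → Prop) (j : ℕ) (hj : j ≤ r) :
    (cycleWithChords r chord).Adj (Yp r j) (Yp r (j+1)) := by
  rw [cycleWithChords, fromRel_adj]
  refine ⟨Yp_ne j hj, Or.inl (Or.inl ?_)⟩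
  match j with
  | 0 =>
    have h0 : (0:ℕ) < r := hr
    rw [show Yp r 1 = yv r 0 from rfl, show yv r 0 = .inl (.inr ⟨0, h0⟩) from dif_pos h0]
    exact rfl
  | m+1 =>
    have hm : m < r := by omega
    rw [show Yp r (m+1) = yv r m from rfl, show yv r m = .inl (.inr ⟨m, hm⟩) from dif_pos hm]
    by_cases h1 : m+1 < r
    · rw [show Yp r (m+2) = yv r (m+1) from rfl,
        show yv r (m+1) = .inl (.inr ⟨m+1, h1⟩) from dif_pos h1]
      exact rfl
    · rw [show Yp r (m+2) = yv r (m+1) from rfl,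
        show yv r (m+1) = .inr true from dif_neg h1]
      show m = r - 1
      omega

/-- Let `C` be an even cycle formed by two internally disjoint paths of equal length
from `x` to `v`, let `M1` be one of the two perfect matchings decomposing `E(C)`, and
let `G'` be `C` together with chords `x_k y_l` with `|k - l| ≤ 1` forming a perfect
matching on the internal vertices and satisfying `x_k y_l` is a chord iff `x_l y_k`
is.  Then `G' - M1` is a Hamiltonian path from `x` to `v`. -/
theorem cycle_with_short_chords_minus_matching_hamiltonian_path
    (r : ℕ) (hr : 1 ≤ r) (chord : Fin r → Fin r → Prop)
    (hmatch₁ : ∀ k, ∃! l, chord k l) (hmatch₂ : ∀ l, ∃! k, chord k l)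
    (hshort : ∀ k l, chord k l → ((k : ℤ) - (l : ℤ)).natAbs ≤ 1)
    (hsymm : ∀ k l, chord k l ↔ chord l k)
    (M1 : (evenCycle r).Subgraph) (hM1 : M1.IsPerfectMatching) :
    ∃ p : ((cycleWithChords r chord).deleteEdges M1.edgeSet).Walk
        (Sum.inr false) (Sum.inr true),
      p.IsPath ∧ ∀ w, w ∈ p.support := by
  classical
  have h0r : (0:ℕ) < r := hr
  -- the chord involution
  let σ : Fin r → Fin r := fun k => (hmatch₁ k).choose
  have hσc : ∀ k, chord k (σ k) := fun k => (hmatch₁ k).choose_spec.1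
  have hσu : ∀ k l, chord k l → l = σ k := fun k l h => (hmatch₁ k).choose_spec.2 l h
  have hσinv : ∀ k, σ (σ k) = k :=
    fun k => (hσu (σ k) k ((hsymm k (σ k)).mp (hσc k))).symm
  have hσs : ∀ k : Fin r, (σ k : ℕ) ≤ (k : ℕ) + 1 ∧ (k : ℕ) ≤ (σ k : ℕ) + 1 := by
    intro k
    have h1 := hshort k (σ k) (hσc k)
    have h2 : ((k:ℕ) : ℤ) = (k : ℤ) := by simp
    have h3 : (((σ k : ℕ)) : ℤ) = ((σ k : Fin r) : ℤ) := by simp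
    omega
  -- the parity of M1
  obtain ⟨ε, hε, h0X, h0Y⟩ : ∃ ε : ℕ, ε ≤ 1 ∧ (M1.Adj (Xp r 0) (Xp r 1) ↔ 0 = ε) ∧
      (M1.Adj (Yp r 0) (Yp r 1) ↔ 0 = 1 - ε) := by
    obtain ⟨w, hw, huniq⟩ := hM1.1 (hM1.2 (.inr false))
    by_cases h : M1.Adj (.inr false) (xv r 0)
    · refine ⟨0, by omega, iff_of_true h rfl, iff_of_false ?_ (by omega)⟩
      intro hy
      have hcon := (huniq (xv r 0) h).trans (huniq (yv r 0) hy).symm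
      rw [show xv r 0 = .inl (.inl ⟨0, h0r⟩) from dif_pos h0r,
        show yv r 0 = .inl (.inr ⟨0, h0r⟩) from dif_pos h0r] at hcon
      simp at hcon
    · refine ⟨1, le_refl _, iff_of_false h (by omega), iff_of_true ?_ rfl⟩
      rcases nbr0 w (M1.adj_sub hw) with h1 | h1
      · exact absurd (h1 ▸ hw) h
      · rw [show Yp r 1 = yv r 0 from rfl, ← h1]
        exact hw
  have keyXf := keyX M1 hM1 ε hε h0X
  have keyYf := keyY M1 hM1 (1-ε) (by omega) h0Y
  -- edges of G' minus M1
  have Gc : ∀ k l : Fin r, chord k l →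
      ((cycleWithChords r chord).deleteEdges M1.edgeSet).Adj (.inl (.inl k)) (.inl (.inr l)) := by
    intro k l hkl
    rw [deleteEdges_adj]
    constructor
    · rw [cycleWithChords, fromRel_adj]
      exact ⟨by simp, Or.inl (Or.inr hkl)⟩
    · intro hmem
      rw [Subgraph.mem_edgeSet] at hmem
      have h2 := M1.adj_sub hmem
      rw [evenCycle, fromRel_adj] at h2
      rcases h2.2 with h | h <;> simp [cycRel] at h
  have GXf : ∀ j, j ≤ r → j % 2 ≠ ε →
      ((cycleWithChords r chord).deleteEdges M1.edgeSet).Adj (Xp r j) (Xp r (j+1)) := by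
    intro j hj hp
    rw [deleteEdges_adj]
    refine ⟨cwcX hr chord j hj, ?_⟩
    intro hmem
    rw [Subgraph.mem_edgeSet] at hmem
    exact hp ((keyXf j hj).mp hmem)
  have GYf : ∀ j, j ≤ r → j % 2 = ε →
      ((cycleWithChords r chord).deleteEdges M1.edgeSet).Adj (Yp r j) (Yp r (j+1)) := by
    intro j hj hp
    rw [deleteEdges_adj]
    refine ⟨cwcY hr chord j hj, ?_⟩
    intro hmem
    rw [Subgraph.mem_edgeSet] at hmem
    have := (keyYf j hj).mp hmem
    omega
  obtain ⟨p0, hp0, hsup0⟩ := mainInd chord _ σ hσc hσinv hσs ε hε Gc GXf GYf r 0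
    (by omega) (fun hi => Nat.zero_le _)
  have e0 : ((cycleWithChords r chord).deleteEdges M1.edgeSet).Adj (.inr false)
      (if (0+1) % 2 = ε then xv r 0 else yv r 0) := by
    by_cases hε1 : ε = 1
    · rw [if_pos (by omega)]
      exact GXf 0 (by omega) (by omega)
    · rw [if_neg (by omega)]
      exact GYf 0 (by omega) (by omega)
  refine ⟨Walk.cons e0 p0, ?_, ?_⟩
  · rw [Walk.cons_isPath_iff]
    refine ⟨hp0, ?_⟩
    rw [hsup0]
    rintro (h | ⟨k, hk, h | h⟩) <;> simp at h
  · intro w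
    rw [Walk.support_cons, List.mem_cons]
    match w with
    | .inr false => exact Or.inl rfl
    | .inr true => exact Or.inr ((hsup0 _).mpr (Or.inl rfl))
    | .inl (.inl k) => exact Or.inr ((hsup0 _).mpr (Or.inr ⟨k, Nat.zero_le _, Or.inl rfl⟩))
    | .inl (.inr k) => exact Or.inr ((hsup0 _).mpr (Or.inr ⟨k, Nat.zero_le _, Or.inr rfl⟩))
end

section
/- Let G be a 3-connected graph, C a cycle in G with V(C) ≠ V(G) such that G[V(C)] consists of C plus a matching of chords, and let x, y be two distinct vertices of degree 2 in G[V(C)]. Then the set of degree-2 vertices of G[V(C)] other than x and y is nonempty. -/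
open SimpleGraph

/-- A graph is 3-connected if it has at least 4 vertices and removing any set of at
most 2 vertices leaves it connected. -/
def ThreeConnected {V : Type*} [Fintype V] [DecidableEq V] (G : SimpleGraph V) : Prop :=
  4 ≤ Fintype.card V ∧
    ∀ S : Finset V, S.card ≤ 2 →
      (G.comap (Subtype.val : {w : V // w ∉ S} → V)).Connected

/-!
If every cycle vertex other than `x` and `y` lay on a chord, then in the cubic graph `G` each
of them would have all three neighbours on the cycle (two along the cycle, one across the
chord). Then no edge leaves `V(C) \ {x, y}`, so deleting `x` and `y` separates it from a vertex
outside the cycle, contradicting 3-connectivity.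
-/

namespace SimpleGraph

variable {V : Type*} {G : SimpleGraph V}

lemma Walk.IsCycle.exists_mem_support_ne_ne {u : V} {c : G.Walk u u} (hc : c.IsCycle)
    (x y : V) : ∃ z ∈ c.support, z ≠ x ∧ z ≠ y := by
  have hsnd : u ≠ c.snd := (c.adj_snd hc.not_nil).ne
  have hpen : c.penultimate ≠ u := (c.adj_penultimate hc.not_nil).ne
  have hsnd_pen : c.snd ≠ c.penultimate := hc.snd_ne_penultimate
  by_contra! h
  have hu := h u c.start_mem_support
  have hs := h c.snd (c.getVert_mem_support _)
  have hp := h c.penultimate (c.getVert_mem_support _)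
  generalize c.snd = s, c.penultimate = p at *
  by_cases hux : u = x <;> grind

lemma Walk.IsCycle.neighborSet_subset_support [Finite V] {u v w : V} {c : G.Walk u u}
    (hc : c.IsCycle) (hv : v ∈ c.support) (hw : w ∈ c.support) (hvw : G.Adj v w)
    (hchord : s(v, w) ∉ c.edges) (hdeg : (G.neighborSet v).ncard ≤ 3) :
    G.neighborSet v ⊆ {t | t ∈ c.support} := by
  set N := c.toSubgraph.neighborSet v
  have hwN : w ∉ N := fun h ↦ hchord (c.adj_toSubgraph_iff_mem_edges.mp h)
  have hsub : insert w N ⊆ G.neighborSet v :=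
    Set.insert_subset hvw fun _ ht ↦ c.toSubgraph.adj_sub ht
  have heq : insert w N = G.neighborSet v := by
    refine Set.eq_of_subset_of_ncard_le hsub ?_ (Set.toFinite _)
    rw [Set.ncard_insert_of_notMem hwN, hc.ncard_neighborSet_toSubgraph_eq_two hv]
    exact hdeg
  rw [← heq]
  exact Set.insert_subset hw fun _ ht ↦ c.mem_verts_toSubgraph.mp ht.snd_mem

lemma exists_adj_notMem_of_connected_comap {S : Finset V}
    (hconn : (G.comap (Subtype.val : {w : V // w ∉ S} → V)).Connected) {A : Set V} {a b : V}
    (ha : a ∈ A) (haS : a ∉ S) (hb : b ∉ A) (hbS : b ∉ S) :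
    ∃ v ∈ A, v ∉ S ∧ ∃ w ∉ A, G.Adj v w := by
  obtain ⟨p⟩ := hconn.preconnected ⟨a, haS⟩ ⟨b, hbS⟩
  obtain ⟨d, -, hd, hd'⟩ := p.exists_boundary_dart (Subtype.val ⁻¹' A) ha hb
  exact ⟨d.fst, hd, d.fst.2, d.snd, hd', d.adj⟩

end SimpleGraph

lemma ThreeConnected.exists_adj_notMem {V : Type*} [Fintype V] [DecidableEq V]
    {G : SimpleGraph V} (h3 : ThreeConnected G) {A : Set V} {x y : V} (hx : x ∈ A) (hy : y ∈ A)
    (hA : (A \ {x, y}).Nonempty) (hA_ne : A ≠ Set.univ) :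
    ∃ v ∈ A \ {x, y}, ∃ w ∉ A, G.Adj v w := by
  obtain ⟨a, ha, haxy⟩ := hA
  obtain ⟨b, hb⟩ := (Set.ne_univ_iff_exists_notMem A).mp hA_ne
  have hcard : ({x, y} : Finset V).card ≤ 2 := Finset.card_le_two
  obtain ⟨v, hv, hvxy, w, hw, hvw⟩ :=
    exists_adj_notMem_of_connected_comap (h3.2 _ hcard) ha (by simpa using haxy) hb
      (by simp only [Finset.mem_insert, Finset.mem_singleton]; rintro (rfl | rfl) <;> contradiction)
  exact ⟨v, ⟨hv, by simpa using hvxy⟩, w, hw, hvw⟩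

theorem third_boundary_vertex_general {V : Type*} [Fintype V] [DecidableEq V]
    (G : SimpleGraph V) (h3 : ThreeConnected G)
    (hcubic : ∀ v : V, (G.neighborSet v).ncard = 3)
    (u : V) (c : G.Walk u u) (hc : c.IsCycle)
    (hS : {v : V | v ∈ c.support} ≠ Set.univ)
    (x y : V) (hx : x ∈ c.support) (hy : y ∈ c.support) :
    ∃ z ∈ c.support, z ≠ x ∧ z ≠ y ∧
      ∀ w ∈ c.support, G.Adj z w → s(z, w) ∈ c.edges := by
  by_contra! hchord
  obtain ⟨z, hz, hzx, hzy⟩ := hc.exists_mem_support_ne_ne x y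
  obtain ⟨v, ⟨hv, hvxy⟩, w, hw, hvw⟩ :=
    h3.exists_adj_notMem (A := {t | t ∈ c.support}) hx hy ⟨z, hz, by simp [hzx, hzy]⟩ hS
  simp only [Set.mem_insert_iff, Set.mem_singleton_iff, not_or] at hvxy
  obtain ⟨w', hw', hvw', hvw'_chord⟩ := hchord v hv hvxy.1 hvxy.2
  exact hw (hc.neighborSet_subset_support hv hw' hvw' hvw'_chord (hcubic v).le hvw)

/-- Let `G` be a 3-connected (cubic) graph and `c` a cycle with `V(c) ≠ V(G)` such
that the induced subgraph on `V(c)` is `c` plus a matching of chords (each vertex of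
`c` lies on at most one chord).  If `x` and `y` are two distinct degree-2 vertices of
`G[V(c)]` (vertices on `c` incident with no chord), then there is a degree-2 vertex
of `G[V(c)]` other than `x` and `y`. -/
theorem third_boundary_vertex {V : Type*} [Fintype V] [DecidableEq V]
    (G : SimpleGraph V) (h3 : ThreeConnected G)
    (hcubic : ∀ v : V, (G.neighborSet v).ncard = 3)
    (u : V) (c : G.Walk u u) (hc : c.IsCycle)
    (hS : {v : V | v ∈ c.support} ≠ Set.univ)
    (hmatching : ∀ v ∈ c.support,
      Set.Subsingleton {w : V | w ∈ c.support ∧ G.Adj v w ∧ s(v, w) ∉ c.edges})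
    (x y : V) (hx : x ∈ c.support) (hy : y ∈ c.support) (hxy : x ≠ y)
    (hx2 : ∀ w ∈ c.support, G.Adj x w → s(x, w) ∈ c.edges)
    (hy2 : ∀ w ∈ c.support, G.Adj y w → s(y, w) ∈ c.edges) :
    ∃ z ∈ c.support, z ≠ x ∧ z ≠ y ∧
      ∀ w ∈ c.support, G.Adj z w → s(z, w) ∈ c.edges :=
  third_boundary_vertex_general G h3 hcubic u c hc hS x y hx hy
end
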